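/- Under the FIFO property, removing any intermediate node from a route and connecting its neighbors directly does not increase the arrival times at all subsequent nodes, provided the time-dependent cost additionally satisfies the time-dependent triangle inequality: departing i at time t and traveling directly to j arrives no later than traveling i→l→j departing at time t. -/

import Mathlib

/-!
Up to node `p` the two routes coincide, hence so do their arrival times. At the bypass the
triangle inequality gives `k' (p + 1) ≤ k (p + 2)`; from there on both routes visit the same
nodes, and FIFO propagates an earlier arrival at one node to an earlier arrival at the next.
-/

def IsArrivalSeq {V : Type*} (C : V → V → ℝ → ℝ) (R : ℕ → V) (k : ℕ → ℝ) : Prop :=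
  ∀ a, k (a + 1) = k a + C (R a) (R (a + 1)) (k a)

namespace IsArrivalSeq

variable {V : Type*} {C : V → V → ℝ → ℝ} {R R' : ℕ → V} {k k' : ℕ → ℝ}

theorem shift (hk : IsArrivalSeq C R k) (n : ℕ) :
    IsArrivalSeq C (fun a => R (n + a)) (fun a => k (n + a)) :=
  fun a => hk (n + a)

theorem eq_of_route_eq_of_le (hk : IsArrivalSeq C R k) (hk' : IsArrivalSeq C R' k')
    (h0 : k' 0 = k 0) {p : ℕ} (hR : ∀ a ≤ p, R' a = R a) : ∀ a ≤ p, k' a = k a := by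
  intro a ha
  induction a with
  | zero => exact h0
  | succ n ih => rw [hk' n, hk n, ih (by omega), hR n (by omega), hR (n + 1) ha]

theorem le_of_le_zero (hfifo : ∀ i j s t, s ≤ t → s + C i j s ≤ t + C i j t)
    (hk : IsArrivalSeq C R k) (hk' : IsArrivalSeq C R k') (h0 : k' 0 ≤ k 0) :
    ∀ a, k' a ≤ k a
  | 0 => h0
  | n + 1 => by
    rw [hk' n, hk n]
    exact hfifo _ _ _ _ (le_of_le_zero hfifo hk hk' h0 n)

theorem le_of_bypass (htri : ∀ i j l t, t + C i j t ≤ (t + C i l t) + C l j (t + C i l t))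
    (hk : IsArrivalSeq C R k) (hk' : IsArrivalSeq C R' k') {p : ℕ} (hp : k' p = k p)
    (hRp : R' p = R p) (hRp' : R' (p + 1) = R (p + 2)) : k' (p + 1) ≤ k (p + 2) := by
  rw [hk' p, hk (p + 1), hk p, hp, hRp, hRp']
  exact htri _ _ _ _

end IsArrivalSeq

theorem fifo_deletion_no_later_arrivals_general {V : Type*} (C : V → V → ℝ → ℝ)
    (hfifo : ∀ i j s t, s ≤ t → s + C i j s ≤ t + C i j t)
    (htri : ∀ i j l t, t + C i j t ≤ (t + C i l t) + C l j (t + C i l t))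
    (R : ℕ → V) (s : ℝ) (p : ℕ)
    (R' : ℕ → V) (hR' : ∀ a, R' a = if a ≤ p then R a else R (a + 1))
    (k k' : ℕ → ℝ) (hk0 : k 0 = s) (hk'0 : k' 0 = s)
    (hk : ∀ a, k (a + 1) = k a + C (R a) (R (a + 1)) (k a))
    (hk' : ∀ a, k' (a + 1) = k' a + C (R' a) (R' (a + 1)) (k' a)) :
    ∀ a, (a ≤ p → k' a = k a) ∧ (p < a → k' a ≤ k (a + 1)) := by
  have hR'_prefix : ∀ a ≤ p, R' a = R a := fun a ha => by rw [hR', if_pos ha]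
  have hR'_suffix : (fun m => R' (p + 1 + m)) = fun m => R (p + 2 + m) := funext fun m => by
    rw [hR', if_neg (by omega)]
    congr 1
    omega
  have hprefix : ∀ a ≤ p, k' a = k a :=
    IsArrivalSeq.eq_of_route_eq_of_le hk hk' (hk'0.trans hk0.symm) hR'_prefix
  have hbypass : k' (p + 1) ≤ k (p + 2) :=
    IsArrivalSeq.le_of_bypass htri hk hk' (hprefix p le_rfl) (hR'_prefix p le_rfl)
      (congrFun hR'_suffix 0)
  have hsuffix : ∀ m, k' (p + 1 + m) ≤ k (p + 2 + m) := by
    refine IsArrivalSeq.le_of_le_zero hfifo (IsArrivalSeq.shift hk (p + 2)) ?_ hbypass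
    rw [← hR'_suffix]
    exact IsArrivalSeq.shift hk' (p + 1)
  refine fun a => ⟨hprefix a, fun ha => ?_⟩
  obtain ⟨m, rfl⟩ := Nat.exists_eq_add_of_lt ha
  convert hsuffix m using 2 <;> omega

/-- Under the FIFO property and the time-dependent triangle inequality, deleting an
intermediate node `R (p+1)` from a route does not increase the arrival time at any
subsequent node. -/
theorem fifo_deletion_no_later_arrivals {V : Type*} (C : V → V → ℝ → ℝ)
    (hnn : ∀ i j t, 0 ≤ C i j t)
    (hfifo : ∀ i j s t, s ≤ t → s + C i j s ≤ t + C i j t)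
    (htri : ∀ i j l t, t + C i j t ≤ (t + C i l t) + C l j (t + C i l t))
    (R : ℕ → V) (s : ℝ) (p : ℕ)
    (R' : ℕ → V) (hR' : ∀ a, R' a = if a ≤ p then R a else R (a + 1))
    (k k' : ℕ → ℝ) (hk0 : k 0 = s) (hk'0 : k' 0 = s)
    (hk : ∀ a, k (a + 1) = k a + C (R a) (R (a + 1)) (k a))
    (hk' : ∀ a, k' (a + 1) = k' a + C (R' a) (R' (a + 1)) (k' a)) :
    ∀ a, (a ≤ p → k' a = k a) ∧ (p < a → k' a ≤ k (a + 1)) :=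
  fifo_deletion_no_later_arrivals_general C hfifo htri R s p R' hR' k k' hk0 hk'0 hk hk'
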